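/- Let y₁', y₂', y₃' : [0,∞) → H solve the t-model system: dy₁'/dt = P B(y₁',y₃') + t P{B(Γ₁, y₃') + B(y₁', Γ₃)}, dy₂'/dt = −P B(y₂',y₃') − t P{B(Γ₂, y₃') + B(y₂', Γ₃)}, dy₃'/dt = −P B(y₁',y₁') + P B(y₂',y₂') − t P{B(Γ₁,y₁') + B(y₁',Γ₁)} + t P{B(Γ₂,y₂') + B(y₂',Γ₂)}, where Γ₁ = (I−P)B(y₁',y₃'), Γ₂ = −(I−P)B(y₂',y₃'), Γ₃ = −(I−P)B(y₁',y₁') + (I−P)B(y₂',y₂'). Then (1/2) d/dt (‖y₁'‖² + ‖y₂'‖² + ‖y₃'‖²) = −t(‖Γ₁‖² + ‖Γ₂‖² + ‖Γ₃‖²). In particular, for t ≥ 0 the L² norm of the t-model solution is non-increasing. -/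

import Mathlib

/-!
Write `F(y) = (B y₁ y₃, -B y₂ y₃, -B y₁ y₁ + B y₂ y₂)` for the full Kraichnan–Orszag field, so
that the t-model reads `y' = P F(y) + t P DF(y)[Γ]` with `Γ = (I - P) F(y)`. As `⟪B f g, h⟫` is
symmetric in `g, h`, the cubic `E(y) = ⟪y, F(y)⟫` vanishes identically, hence so does its first
variation: `⟪y, DF(y)[g]⟫ = -⟪F(y), g⟫`. For `y` in the range of the self-adjoint projection `P`
the projections drop out of `⟪y, y'⟫`, which becomes
`⟪y, F(y)⟫ + t ⟪y, DF(y)[Γ]⟫ = -t ⟪F(y), (I - P) F(y)⟫ = -t ‖Γ‖²`.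
-/

open scoped RealInnerProductSpace

lemma antitoneOn_Ici_of_hasDerivAt_nonpos {f f' : ℝ → ℝ} {a : ℝ}
    (hf : ∀ t, HasDerivAt f (f' t) t) (hf' : ∀ t, a < t → f' t ≤ 0) : AntitoneOn f (Set.Ici a) :=
  antitoneOn_of_hasDerivWithinAt_nonpos (convex_Ici a)
    (fun t _ => (hf t).continuousAt.continuousWithinAt) (fun t _ => (hf t).hasDerivWithinAt)
    (fun t ht => hf' t (by rwa [interior_Ici] at ht))

section TModel

variable {H : Type*} [NormedAddCommGroup H] [InnerProductSpace ℝ H]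
  {P : H →L[ℝ] H} {B : H →L[ℝ] H →L[ℝ] H}

lemma inner_map_of_apply_eq_self (hPsa : ∀ x y : H, ⟪P x, y⟫ = ⟪x, P y⟫) {y : H} (hy : P y = y)
    (z : H) : ⟪y, P z⟫ = ⟪y, z⟫ := by
  rw [← hPsa, hy]

lemma inner_sub_map_self (hPsa : ∀ x y : H, ⟪P x, y⟫ = ⟪x, P y⟫) (hP2 : ∀ x : H, P (P x) = P x)
    (z : H) : ⟪z, z - P z⟫ = ‖z - P z‖ ^ 2 := by
  have h : ⟪P z, z - P z⟫ = 0 := by rw [hPsa, map_sub, hP2, sub_self, inner_zero_right]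
  rw [← real_inner_self_eq_norm_sq, inner_sub_left _ _ (z - P z), h, sub_zero]

lemma inner_kraichnanOrszag_self (hBtri : ∀ f g h : H, ⟪B f g, h⟫ = ⟪B f h, g⟫) (y₁ y₂ y₃ : H) :
    ⟪y₁, B y₁ y₃⟫ + ⟪y₂, -B y₂ y₃⟫ + ⟪y₃, -B y₁ y₁ + B y₂ y₂⟫ = 0 := by
  have transfer : ∀ y : H, ⟪y, B y y₃⟫ = ⟪y₃, B y y⟫ := fun y => by
    rw [real_inner_comm, hBtri, real_inner_comm]
  rw [inner_add_right, inner_neg_right, inner_neg_right, transfer, transfer]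
  ring

lemma inner_kraichnanOrszag_linearization (hBtri : ∀ f g h : H, ⟪B f g, h⟫ = ⟪B f h, g⟫)
    (y₁ y₂ y₃ g₁ g₂ g₃ : H) :
    ⟪y₁, B g₁ y₃ + B y₁ g₃⟫ + ⟪y₂, -(B g₂ y₃ + B y₂ g₃)⟫
        + ⟪y₃, -(B g₁ y₁ + B y₁ g₁) + (B g₂ y₂ + B y₂ g₂)⟫
      = -(⟪B y₁ y₃, g₁⟫ + ⟪-B y₂ y₃, g₂⟫ + ⟪-B y₁ y₁ + B y₂ y₂, g₃⟫) := by
  -- for the cubic `E`, `E(y + g) - E(y - g) = 2 (dE(y)[g] + E(g))`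
  have hplus := inner_kraichnanOrszag_self hBtri (y₁ + g₁) (y₂ + g₂) (y₃ + g₃)
  have hminus := inner_kraichnanOrszag_self hBtri (y₁ - g₁) (y₂ - g₂) (y₃ - g₃)
  have hg := inner_kraichnanOrszag_self hBtri g₁ g₂ g₃
  simp only [map_add, map_sub, add_apply, sub_apply, inner_add_left, inner_add_right,
    inner_sub_left, inner_sub_right, inner_neg_left, inner_neg_right, real_inner_comm _ g₁,
    real_inner_comm _ g₂, real_inner_comm _ g₃] at hplus hminus hg ⊢
  linear_combination (hplus - hminus) / 2 - hg

lemma inner_tModel_field (hPsa : ∀ x y : H, ⟪P x, y⟫ = ⟪x, P y⟫)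
    (hP2 : ∀ x : H, P (P x) = P x) (hBtri : ∀ f g h : H, ⟪B f g, h⟫ = ⟪B f h, g⟫)
    {y₁ y₂ y₃ Γ₁ Γ₂ Γ₃ : H} (t : ℝ) (hy₁ : P y₁ = y₁) (hy₂ : P y₂ = y₂) (hy₃ : P y₃ = y₃)
    (hΓ₁ : Γ₁ = B y₁ y₃ - P (B y₁ y₃)) (hΓ₂ : Γ₂ = -(B y₂ y₃ - P (B y₂ y₃)))
    (hΓ₃ : Γ₃ = -(B y₁ y₁ - P (B y₁ y₁)) + (B y₂ y₂ - P (B y₂ y₂))) :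
    ⟪y₁, P (B y₁ y₃) + t • P (B Γ₁ y₃ + B y₁ Γ₃)⟫
        + ⟪y₂, -P (B y₂ y₃) - t • P (B Γ₂ y₃ + B y₂ Γ₃)⟫
        + ⟪y₃, -P (B y₁ y₁) + P (B y₂ y₂) - t • P (B Γ₁ y₁ + B y₁ Γ₁)
            + t • P (B Γ₂ y₂ + B y₂ Γ₂)⟫
      = -t * (‖Γ₁‖ ^ 2 + ‖Γ₂‖ ^ 2 + ‖Γ₃‖ ^ 2) := by
  have hΓ : ⟪B y₁ y₃, Γ₁⟫ + ⟪-B y₂ y₃, Γ₂⟫ + ⟪-B y₁ y₁ + B y₂ y₂, Γ₃⟫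
      = ‖Γ₁‖ ^ 2 + ‖Γ₂‖ ^ 2 + ‖Γ₃‖ ^ 2 := by
    have hΓ₂' : Γ₂ = -B y₂ y₃ - P (-B y₂ y₃) := by rw [hΓ₂, map_neg]; abel
    have hΓ₃' : Γ₃ = (-B y₁ y₁ + B y₂ y₂) - P (-B y₁ y₁ + B y₂ y₂) := by
      rw [hΓ₃, map_add, map_neg]; abel
    rw [hΓ₁, hΓ₂', hΓ₃', inner_sub_map_self hPsa hP2, inner_sub_map_self hPsa hP2,
      inner_sub_map_self hPsa hP2]
  have hE := inner_kraichnanOrszag_self hBtri y₁ y₂ y₃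
  have hL := inner_kraichnanOrszag_linearization hBtri y₁ y₂ y₃ Γ₁ Γ₂ Γ₃
  rw [hΓ] at hL
  simp only [inner_add_right, inner_sub_right, inner_neg_right, real_inner_smul_right,
    inner_map_of_apply_eq_self hPsa hy₁, inner_map_of_apply_eq_self hPsa hy₂,
    inner_map_of_apply_eq_self hPsa hy₃] at hE hL ⊢
  linear_combination hE + t * hL

end TModel

theorem t_model_energy_identity_general
    {H : Type*} [NormedAddCommGroup H] [InnerProductSpace ℝ H]
    (P : H →L[ℝ] H)
    (hPsa : ∀ x y : H, ⟪P x, y⟫ = ⟪x, P y⟫)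
    (hP2 : ∀ x : H, P (P x) = P x)
    (B : H →L[ℝ] H →L[ℝ] H)
    (hBtri : ∀ f g h : H, ⟪B f g, h⟫ = ⟪B f h, g⟫)
    (y₁ y₂ y₃ Γ₁ Γ₂ Γ₃ : ℝ → H)
    (hΓ₁ : ∀ t, Γ₁ t = B (y₁ t) (y₃ t) - P (B (y₁ t) (y₃ t)))
    (hΓ₂ : ∀ t, Γ₂ t = -(B (y₂ t) (y₃ t) - P (B (y₂ t) (y₃ t))))
    (hΓ₃ : ∀ t, Γ₃ t = -(B (y₁ t) (y₁ t) - P (B (y₁ t) (y₁ t)))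
                        + (B (y₂ t) (y₂ t) - P (B (y₂ t) (y₂ t))))
    (hrange : ∀ t, P (y₁ t) = y₁ t ∧ P (y₂ t) = y₂ t ∧ P (y₃ t) = y₃ t)
    (hy₁ : ∀ t, HasDerivAt y₁
      (P (B (y₁ t) (y₃ t)) + t • P (B (Γ₁ t) (y₃ t) + B (y₁ t) (Γ₃ t))) t)
    (hy₂ : ∀ t, HasDerivAt y₂
      (-P (B (y₂ t) (y₃ t)) - t • P (B (Γ₂ t) (y₃ t) + B (y₂ t) (Γ₃ t))) t)
    (hy₃ : ∀ t, HasDerivAt y₃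
      (-P (B (y₁ t) (y₁ t)) + P (B (y₂ t) (y₂ t))
        - t • P (B (Γ₁ t) (y₁ t) + B (y₁ t) (Γ₁ t))
        + t • P (B (Γ₂ t) (y₂ t) + B (y₂ t) (Γ₂ t))) t) :
    (∀ t : ℝ, HasDerivAt (fun s => ‖y₁ s‖^2 + ‖y₂ s‖^2 + ‖y₃ s‖^2)
        (-2 * t * (‖Γ₁ t‖^2 + ‖Γ₂ t‖^2 + ‖Γ₃ t‖^2)) t) ∧
    AntitoneOn (fun s => ‖y₁ s‖^2 + ‖y₂ s‖^2 + ‖y₃ s‖^2) (Set.Ici (0:ℝ)) := by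
  have hderiv : ∀ t : ℝ, HasDerivAt (fun s => ‖y₁ s‖^2 + ‖y₂ s‖^2 + ‖y₃ s‖^2)
      (-2 * t * (‖Γ₁ t‖^2 + ‖Γ₂ t‖^2 + ‖Γ₃ t‖^2)) t := fun t => by
    obtain ⟨hPy₁, hPy₂, hPy₃⟩ := hrange t
    refine (((hy₁ t).norm_sq.add (hy₂ t).norm_sq).add (hy₃ t).norm_sq).congr_deriv ?_
    linear_combination
      2 * inner_tModel_field hPsa hP2 hBtri t hPy₁ hPy₂ hPy₃ (hΓ₁ t) (hΓ₂ t) (hΓ₃ t)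
  exact ⟨hderiv, antitoneOn_Ici_of_hasDerivAt_nonpos hderiv fun t ht =>
    mul_nonpos_of_nonpos_of_nonneg (by linarith) (by positivity)⟩

/-- Energy identity for the t-model of the Kraichnan-Orszag system:
`(1/2) d/dt (‖y₁'‖² + ‖y₂'‖² + ‖y₃'‖²) = −t(‖Γ₁‖² + ‖Γ₂‖² + ‖Γ₃‖²)`;
in particular the energy is non-increasing on `[0,∞)`. -/
theorem t_model_energy_identity
    {H : Type*} [NormedAddCommGroup H] [InnerProductSpace ℝ H]
    (P : H →L[ℝ] H)
    (hPsa : ∀ x y : H, ⟪P x, y⟫ = ⟪x, P y⟫)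
    (hP2 : ∀ x : H, P (P x) = P x)
    (B : H →L[ℝ] H →L[ℝ] H)
    (hBsym : ∀ f g : H, B f g = B g f)
    (hBtri : ∀ f g h : H, ⟪B f g, h⟫ = ⟪B f h, g⟫)
    (y₁ y₂ y₃ Γ₁ Γ₂ Γ₃ : ℝ → H)
    (hΓ₁ : ∀ t, Γ₁ t = B (y₁ t) (y₃ t) - P (B (y₁ t) (y₃ t)))
    (hΓ₂ : ∀ t, Γ₂ t = -(B (y₂ t) (y₃ t) - P (B (y₂ t) (y₃ t))))
    (hΓ₃ : ∀ t, Γ₃ t = -(B (y₁ t) (y₁ t) - P (B (y₁ t) (y₁ t)))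
                        + (B (y₂ t) (y₂ t) - P (B (y₂ t) (y₂ t))))
    (hrange : ∀ t, P (y₁ t) = y₁ t ∧ P (y₂ t) = y₂ t ∧ P (y₃ t) = y₃ t)
    (hy₁ : ∀ t, HasDerivAt y₁
      (P (B (y₁ t) (y₃ t)) + t • P (B (Γ₁ t) (y₃ t) + B (y₁ t) (Γ₃ t))) t)
    (hy₂ : ∀ t, HasDerivAt y₂
      (-P (B (y₂ t) (y₃ t)) - t • P (B (Γ₂ t) (y₃ t) + B (y₂ t) (Γ₃ t))) t)
    (hy₃ : ∀ t, HasDerivAt y₃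
      (-P (B (y₁ t) (y₁ t)) + P (B (y₂ t) (y₂ t))
        - t • P (B (Γ₁ t) (y₁ t) + B (y₁ t) (Γ₁ t))
        + t • P (B (Γ₂ t) (y₂ t) + B (y₂ t) (Γ₂ t))) t) :
    (∀ t : ℝ, HasDerivAt (fun s => ‖y₁ s‖^2 + ‖y₂ s‖^2 + ‖y₃ s‖^2)
        (-2 * t * (‖Γ₁ t‖^2 + ‖Γ₂ t‖^2 + ‖Γ₃ t‖^2)) t) ∧
    AntitoneOn (fun s => ‖y₁ s‖^2 + ‖y₂ s‖^2 + ‖y₃ s‖^2) (Set.Ici (0:ℝ)) :=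
  t_model_energy_identity_general P hPsa hP2 B hBtri y₁ y₂ y₃ Γ₁ Γ₂ Γ₃ hΓ₁ hΓ₂ hΓ₃ hrange hy₁ hy₂
    hy₃
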